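/- Let q ≥ 3 be odd, let p_k ≥ 0 for k ∈ {−(q−1)/2, …, (q−1)/2} with ∑_k p_k = 1, and let W be the binary input symmetric q-ary output kernel with output alphabet K. Let X be a random variable with finitely many values, Y a random variable taking finitely many values in lists over {−1,+1}, and Y^(q) a random variable taking values in lists over K with |Y^(q)| = |Y| pointwise, such that P(Y^(q)=y′ | X=x, Y=y) = ∏_{i=1}^{|y|} W(y_i, y′_i) whenever P(X=x, Y=y) > 0 and |y′| = |y|. Then I(X; Y^(q)) ≥ I(X; Y) − E[|Y|] · [ H(p_{−(q−1)/2}, …, p_{(q−1)/2}) + log₂( 2p_0² + ∑_{k=1}^{(q−1)/2} (p_k + p_{−k})² ) ], where H(p_{−(q−1)/2}, …, p_{(q−1)/2}) = −∑_k p_k log₂ p_k. -/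

import Mathlib

open scoped BigOperators
open Classical

noncomputable section

structure FinProb (Ω : Type*) [Fintype Ω] where
  p : Ω → ℝ
  nonneg : ∀ ω, 0 ≤ p ω
  sum_one : ∑ ω, p ω = 1

variable {Ω : Type*} [Fintype Ω]

def pr (μ : FinProb Ω) (E : Ω → Prop) : ℝ :=
  ∑ ω, if E ω then μ.p ω else 0

def entropy {S : Type*} (μ : FinProb Ω) (U : Ω → S) : ℝ :=
  -∑ u ∈ Finset.univ.image U,
    pr μ (fun ω => U ω = u) * Real.logb 2 (pr μ (fun ω => U ω = u))

def condEntropy {S T : Type*} (μ : FinProb Ω) (U : Ω → S) (V : Ω → T) : ℝ :=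
  ∑ v ∈ (Finset.univ.image V).filter (fun v => 0 < pr μ (fun ω => V ω = v)),
    pr μ (fun ω => V ω = v) *
      (-∑ u ∈ Finset.univ.image U,
        (pr μ (fun ω => U ω = u ∧ V ω = v) / pr μ (fun ω => V ω = v)) *
          Real.logb 2 (pr μ (fun ω => U ω = u ∧ V ω = v) / pr μ (fun ω => V ω = v)))

def mutualInfo {S T : Type*} (μ : FinProb Ω) (U : Ω → S) (V : Ω → T) : ℝ :=
  entropy μ U - condEntropy μ U V

def expLen {A : Type*} (μ : FinProb Ω) (Y : Ω → List A) : ℝ :=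
  ∑ ω, μ.p ω * (Y ω).length

def Kodd (q : ℕ) : Finset ℤ := Finset.Icc (-(((q - 1) / 2 : ℕ) : ℤ)) (((q - 1) / 2 : ℕ) : ℤ)

def pmOne : Finset ℤ := {-1, 1}

/-!
Since `H(X | Y⁽q⁾) ≤ H(X | Y) + H(Y | Y⁽q⁾)`, it suffices to bound `H(Y | Y⁽q⁾)` by `E[|Y|]` times
the bracket. By Gibbs' inequality, `H(U | V) ≤ E[-log₂ Q(U, V)]` for every sub-stochastic reverse
kernel `Q`; the triangle inequality is the case `Q(x | z) = ∑_y P(x | y) P(y | z)`. For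
`H(Y | Y⁽q⁾)` take the memoryless extension of the posterior `ρ(b | k) = p_{kb} / (p_k + p_{-k})`
of the channel under uniform input. Then `-log₂ Q` splits over the symbols, and each symbol
contributes `H(p) + ∑_k p_k log₂ (p_k + p_{-k}) ≤ H(p) + log₂ ∑_k p_k (p_k + p_{-k})` by Jensen,
where `∑_k p_k (p_k + p_{-k}) = 2 p₀² + ∑_{k ≥ 1} (p_k + p_{-k})²`.
-/

open Finset Real

section Probability

variable (μ : FinProb Ω)

lemma pr_nonneg (E : Ω → Prop) : 0 ≤ pr μ E :=
  sum_nonneg fun ω _ => by split_ifs <;> simp [μ.nonneg ω]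

lemma pr_mono {E F : Ω → Prop} (h : ∀ ω, E ω → F ω) : pr μ E ≤ pr μ F :=
  sum_le_sum fun ω _ => by
    by_cases hE : E ω
    · simp [hE, h ω hE]
    · by_cases hF : F ω <;> simp [hE, hF, μ.nonneg ω]

lemma pr_congr {E F : Ω → Prop} (h : ∀ ω, E ω ↔ F ω) : pr μ E = pr μ F := by
  rw [show E = F from funext fun ω => propext (h ω)]

lemma le_pr {E : Ω → Prop} {ω : Ω} (h : E ω) : μ.p ω ≤ pr μ E := by
  unfold pr
  have := single_le_sum (f := fun ω => if E ω then μ.p ω else 0)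
    (fun ω _ => by split_ifs <;> simp [μ.nonneg ω]) (mem_univ ω)
  simpa [h] using this

lemma exists_pos_of_pr_pos {E : Ω → Prop} (h : 0 < pr μ E) : ∃ ω, 0 < μ.p ω ∧ E ω := by
  have h' : ∑ _ω : Ω, (0 : ℝ) < ∑ ω, if E ω then μ.p ω else 0 := by rwa [sum_const_zero]
  obtain ⟨ω, -, hω⟩ := exists_lt_of_sum_lt h'
  by_cases hE : E ω
  · exact ⟨ω, by simpa [hE] using hω, hE⟩
  · simp [hE] at hω

lemma sum_fiberwise_of_mem {S : Type*} (Y : Ω → S) {s : Finset S} (hs : ∀ ω, Y ω ∈ s)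
    (g : S → Ω → ℝ) : ∑ ω, g (Y ω) ω = ∑ y ∈ s, ∑ ω, if Y ω = y then g y ω else 0 := by
  rw [sum_comm]
  refine sum_congr rfl fun ω _ => ?_
  rw [sum_ite_eq, if_pos (hs ω)]

lemma sum_pr_mul_of_mem {S : Type*} (Y : Ω → S) {s : Finset S} (hs : ∀ ω, Y ω ∈ s)
    (f : S → ℝ) : ∑ y ∈ s, pr μ (fun ω => Y ω = y) * f y = ∑ ω, μ.p ω * f (Y ω) := by
  rw [sum_fiberwise_of_mem Y hs fun y ω => μ.p ω * f y]
  simp only [pr, sum_mul, ite_mul, zero_mul]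

lemma sum_pr_and {S : Type*} (U : Ω → S) (E : Ω → Prop) :
    ∑ u ∈ univ.image U, pr μ (fun ω => U ω = u ∧ E ω) = pr μ E := by
  rw [pr, sum_fiberwise_of_mem U (fun ω => mem_image_of_mem U (mem_univ ω))
    fun _ ω => if E ω then μ.p ω else 0]
  refine sum_congr rfl fun u _ => sum_congr rfl fun ω _ => ?_
  by_cases hU : U ω = u <;> by_cases hE : E ω <;> simp [hU, hE]

lemma sum_sum_pr_and_mul {S T : Type*} (U : Ω → S) (V : Ω → T) (f : S → T → ℝ) :
    ∑ v ∈ univ.image V, ∑ u ∈ univ.image U, pr μ (fun ω => U ω = u ∧ V ω = v) * f u v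
      = ∑ ω, μ.p ω * f (U ω) (V ω) := by
  simp only [pr, sum_mul, ite_mul, zero_mul]
  rw [sum_congr rfl fun v _ => sum_comm, sum_comm]
  refine sum_congr rfl fun ω _ => ?_
  rw [sum_eq_single (V ω), sum_eq_single (U ω)]
  · simp
  · exact fun u _ hu => if_neg fun h => hu h.1.symm
  · exact fun h => absurd (mem_image_of_mem U (mem_univ ω)) h
  · exact fun v _ hv => sum_eq_zero fun u _ => if_neg fun h => hv h.2.symm
  · exact fun h => absurd (mem_image_of_mem V (mem_univ ω)) h

lemma pr_and_eq_mul_of_cond {S T R : Type*} (X : Ω → S) (Y : Ω → T) (Z : Ω → R) (y : T) (z : R)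
    (c : ℝ) (h : ∀ x, 0 < pr μ (fun ω => X ω = x ∧ Y ω = y) →
      pr μ (fun ω => Z ω = z ∧ X ω = x ∧ Y ω = y) / pr μ (fun ω => X ω = x ∧ Y ω = y) = c) :
    pr μ (fun ω => Z ω = z ∧ Y ω = y) = pr μ (fun ω => Y ω = y) * c := by
  rw [← sum_pr_and μ X (fun ω => Z ω = z ∧ Y ω = y), ← sum_pr_and μ X (fun ω => Y ω = y), sum_mul]
  refine sum_congr rfl fun x _ => ?_
  have hcomm : pr μ (fun ω => X ω = x ∧ Z ω = z ∧ Y ω = y)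
      = pr μ (fun ω => Z ω = z ∧ X ω = x ∧ Y ω = y) := pr_congr μ fun ω => and_left_comm
  rw [hcomm]
  rcases (pr_nonneg μ fun ω => X ω = x ∧ Y ω = y).eq_or_lt with h0 | hpos
  · rw [← h0, zero_mul]
    exact le_antisymm (h0 ▸ pr_mono μ fun ω hω => hω.2) (pr_nonneg μ _)
  · rw [← h x hpos, mul_div_cancel₀ _ hpos.ne']

end Probability

theorem sum_mul_logb_le_sum_mul_logb {ι : Type*} (s : Finset ι) {a b : ι → ℝ}
    (ha : ∀ i ∈ s, 0 ≤ a i) (hb : ∀ i ∈ s, 0 ≤ b i) (hab : ∀ i ∈ s, 0 < a i → 0 < b i)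
    (hsum : ∑ i ∈ s, b i ≤ ∑ i ∈ s, a i) :
    ∑ i ∈ s, a i * logb 2 (b i) ≤ ∑ i ∈ s, a i * logb 2 (a i) := by
  have hlog2 : 0 < log 2 := log_pos one_lt_two
  have key : ∀ i ∈ s, a i * logb 2 (b i) - a i * logb 2 (a i) ≤ (b i - a i) / log 2 := by
    intro i hi
    rcases (ha i hi).eq_or_lt with h0 | hpos
    · simpa [← h0] using div_nonneg (hb i hi) hlog2.le
    · have hbpos := hab i hi hpos
      rw [← mul_sub, ← logb_div hbpos.ne' hpos.ne', logb, mul_div_assoc']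
      gcongr
      calc a i * log (b i / a i) ≤ a i * (b i / a i - 1) :=
            mul_le_mul_of_nonneg_left (log_le_sub_one_of_pos (div_pos hbpos hpos)) hpos.le
        _ = b i - a i := by field_simp
  have hsum' := sum_le_sum key
  rw [sum_sub_distrib, ← sum_div, sum_sub_distrib] at hsum'
  have : (∑ i ∈ s, b i - ∑ i ∈ s, a i) / log 2 ≤ 0 :=
    div_nonpos_of_nonpos_of_nonneg (by linarith) hlog2.le
  linarith

theorem sum_mul_logb_le_logb_sum_mul {ι : Type*} (s : Finset ι) {w x : ι → ℝ}
    (hw : ∀ i ∈ s, 0 ≤ w i) (hw1 : ∑ i ∈ s, w i = 1) (hx : ∀ i ∈ s, 0 ≤ x i)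
    (hwx : ∀ i ∈ s, 0 < w i → 0 < x i) :
    ∑ i ∈ s, w i * logb 2 (x i) ≤ logb 2 (∑ i ∈ s, w i * x i) := by
  set T := ∑ i ∈ s, w i * x i
  have hT : 0 < T := by
    have h' : ∑ _i ∈ s, (0 : ℝ) < ∑ i ∈ s, w i := by rw [sum_const_zero, hw1]; exact one_pos
    obtain ⟨i, hi, hwi⟩ := exists_lt_of_sum_lt h'
    exact (mul_pos hwi (hwx i hi hwi)).trans_le
      (single_le_sum (fun j hj => mul_nonneg (hw j hj) (hx j hj)) hi)
  -- Gibbs against the weights `w i * x i / T`, which also sum to one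
  have hgibbs := sum_mul_logb_le_sum_mul_logb s (b := fun i => w i * x i / T) hw
    (fun i hi => div_nonneg (mul_nonneg (hw i hi) (hx i hi)) hT.le)
    (fun i hi hwi => div_pos (mul_pos hwi (hwx i hi hwi)) hT)
    (by rw [← sum_div, div_self hT.ne', hw1])
  have hterm : ∀ i ∈ s, w i * logb 2 (w i * x i / T)
      = w i * logb 2 (w i) + w i * logb 2 (x i) - w i * logb 2 T := by
    intro i hi
    rcases (hw i hi).eq_or_lt with h0 | hwi
    · simp [← h0]
    · rw [logb_div (mul_pos hwi (hwx i hi hwi)).ne' hT.ne',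
        logb_mul hwi.ne' (hwx i hi hwi).ne']
      ring
  rw [sum_congr rfl hterm, sum_sub_distrib, sum_add_distrib, ← sum_mul, hw1] at hgibbs
  linarith

section Entropy

variable (μ : FinProb Ω)

/-- `P(U = u | V = v)`, with the junk value `0` when `P(V = v) = 0`. -/
def condPr {S T : Type*} (U : Ω → S) (V : Ω → T) (u : S) (v : T) : ℝ :=
  pr μ (fun ω => U ω = u ∧ V ω = v) / pr μ (fun ω => V ω = v)

variable {S T : Type*} (U : Ω → S) (V : Ω → T)

lemma condPr_nonneg (u : S) (v : T) : 0 ≤ condPr μ U V u v :=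
  div_nonneg (pr_nonneg μ _) (pr_nonneg μ _)

lemma pr_mul_condPr (u : S) (v : T) :
    pr μ (fun ω => V ω = v) * condPr μ U V u v = pr μ (fun ω => U ω = u ∧ V ω = v) := by
  rcases (pr_nonneg μ fun ω => V ω = v).eq_or_lt with h0 | hv
  · rw [← h0, zero_mul]
    exact le_antisymm (pr_nonneg μ _) (h0 ▸ pr_mono μ fun ω h => h.2)
  · exact mul_div_cancel₀ _ hv.ne'

lemma sum_condPr (v : T) :
    ∑ u ∈ univ.image U, condPr μ U V u v = pr μ (fun ω => V ω = v) / pr μ (fun ω => V ω = v) := by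
  simp only [condPr, ← sum_div, sum_pr_and]

lemma sum_condPr_le_one (v : T) : ∑ u ∈ univ.image U, condPr μ U V u v ≤ 1 :=
  (sum_condPr μ U V v).trans_le (div_self_le_one _)

lemma condPr_pos {ω : Ω} (hω : 0 < μ.p ω) : 0 < condPr μ U V (U ω) (V ω) :=
  div_pos (hω.trans_le (le_pr μ ⟨rfl, rfl⟩)) (hω.trans_le (le_pr μ rfl))

lemma condEntropy_eq_sum_pr_mul : condEntropy μ U V = ∑ v ∈ univ.image V,
    pr μ (fun ω => V ω = v) * -∑ u ∈ univ.image U, condPr μ U V u v * logb 2 (condPr μ U V u v) :=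
  sum_filter_of_ne fun _ _ h => (pr_nonneg μ _).lt_of_ne' (left_ne_zero_of_mul h)

lemma condEntropy_eq_sum_mul :
    condEntropy μ U V = ∑ ω, μ.p ω * -logb 2 (condPr μ U V (U ω) (V ω)) := by
  rw [condEntropy_eq_sum_pr_mul, ← sum_sum_pr_and_mul μ U V fun u v => -logb 2 (condPr μ U V u v)]
  refine sum_congr rfl fun v _ => ?_
  rw [mul_neg, mul_sum, ← sum_neg_distrib]
  refine sum_congr rfl fun u _ => ?_
  rw [← pr_mul_condPr]
  ring

theorem condEntropy_le_sum_mul_neg_logb (Q : S → T → ℝ) (hQ0 : ∀ u v, 0 ≤ Q u v)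
    (hQ1 : ∀ v, ∑ u ∈ univ.image U, Q u v ≤ 1) (hQpos : ∀ ω, 0 < μ.p ω → 0 < Q (U ω) (V ω)) :
    condEntropy μ U V ≤ ∑ ω, μ.p ω * -logb 2 (Q (U ω) (V ω)) := by
  rw [condEntropy_eq_sum_pr_mul, ← sum_sum_pr_and_mul μ U V fun u v => -logb 2 (Q u v)]
  refine sum_le_sum fun v _ => ?_
  have hrw : ∑ u ∈ univ.image U, pr μ (fun ω => U ω = u ∧ V ω = v) * -logb 2 (Q u v)
      = pr μ (fun ω => V ω = v) * -∑ u ∈ univ.image U, condPr μ U V u v * logb 2 (Q u v) := by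
    rw [mul_neg, mul_sum, ← sum_neg_distrib]
    refine sum_congr rfl fun u _ => ?_
    rw [← pr_mul_condPr]
    ring
  rw [hrw]
  rcases (pr_nonneg μ fun ω => V ω = v).eq_or_lt with h0 | hv
  · simp [← h0]
  refine mul_le_mul_of_nonneg_left (neg_le_neg ?_) hv.le
  refine sum_mul_logb_le_sum_mul_logb _ (fun u _ => condPr_nonneg μ U V u v) (fun u _ => hQ0 u v)
    (fun u _ hu => ?_) (by rw [sum_condPr, div_self hv.ne']; exact hQ1 v)
  rw [← mul_pos_iff_of_pos_left hv, pr_mul_condPr] at hu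
  obtain ⟨ω, hω, rfl, rfl⟩ := exists_pos_of_pr_pos μ hu
  exact hQpos ω hω

theorem condEntropy_le_add {R : Type*} (Z : Ω → R) :
    condEntropy μ U Z ≤ condEntropy μ U V + condEntropy μ V Z := by
  set Q : S → R → ℝ := fun u z => ∑ v ∈ univ.image V, condPr μ U V u v * condPr μ V Z v z
  have hle : ∀ ω, condPr μ U V (U ω) (V ω) * condPr μ V Z (V ω) (Z ω) ≤ Q (U ω) (Z ω) :=
    fun ω => single_le_sum (f := fun v => condPr μ U V (U ω) v * condPr μ V Z v (Z ω))
      (fun v _ => mul_nonneg (condPr_nonneg μ U V _ _) (condPr_nonneg μ V Z _ _))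
      (mem_image_of_mem V (mem_univ ω))
  have hQ1 : ∀ z, ∑ u ∈ univ.image U, Q u z ≤ 1 := by
    intro z
    calc ∑ u ∈ univ.image U, Q u z
        = ∑ v ∈ univ.image V, (∑ u ∈ univ.image U, condPr μ U V u v) * condPr μ V Z v z := by
          rw [sum_comm]; simp only [sum_mul]
      _ ≤ ∑ v ∈ univ.image V, condPr μ V Z v z :=
          sum_le_sum fun v _ => mul_le_of_le_one_left (condPr_nonneg μ V Z v z)
            (sum_condPr_le_one μ U V v)
      _ ≤ 1 := sum_condPr_le_one μ V Z z
  have hpos : ∀ ω, 0 < μ.p ω →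
      0 < condPr μ U V (U ω) (V ω) * condPr μ V Z (V ω) (Z ω) :=
    fun ω hω => mul_pos (condPr_pos μ U V hω) (condPr_pos μ V Z hω)
  calc condEntropy μ U Z ≤ ∑ ω, μ.p ω * -logb 2 (Q (U ω) (Z ω)) :=
        condEntropy_le_sum_mul_neg_logb μ U Z Q
          (fun u z => sum_nonneg fun v _ =>
            mul_nonneg (condPr_nonneg μ U V u v) (condPr_nonneg μ V Z v z))
          hQ1 fun ω hω => (hpos ω hω).trans_le (hle ω)
    _ ≤ ∑ ω, μ.p ω *
          (-logb 2 (condPr μ U V (U ω) (V ω)) + -logb 2 (condPr μ V Z (V ω) (Z ω))) := by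
        refine sum_le_sum fun ω _ => ?_
        rcases (μ.nonneg ω).eq_or_lt with h0 | hω
        · simp [← h0]
        refine mul_le_mul_of_nonneg_left ?_ hω.le
        rw [← neg_add, ← logb_mul (condPr_pos μ U V hω).ne' (condPr_pos μ V Z hω).ne',
          neg_le_neg_iff]
        exact logb_le_logb_of_le one_lt_two (hpos ω hω) (hle ω)
    _ = condEntropy μ U V + condEntropy μ V Z := by
        rw [condEntropy_eq_sum_mul, condEntropy_eq_sum_mul, ← sum_add_distrib]
        simp only [mul_add]

end Entropy

section Memoryless

variable {A B : Type*}

lemma List.zipWith_ofFn_ofFn {C : Type*} (f : A → B → C) {n : ℕ} (s : Fin n → A) (t : Fin n → B) :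
    List.zipWith f (List.ofFn s) (List.ofFn t) = List.ofFn fun i => f (s i) (t i) :=
  List.ext_getElem (by simp) (by simp)

-- Words of different lengths get `0`: `zipWith` alone would truncate the longer one.
def listKernel (ρ : A → B → ℝ) (y : List A) (z : List B) : ℝ :=
  if y.length = z.length then (List.zipWith ρ y z).prod else 0

lemma listKernel_ofFn (ρ : A → B → ℝ) {n : ℕ} (s : Fin n → A) (t : Fin n → B) :
    listKernel ρ (List.ofFn s) (List.ofFn t) = ∏ i, ρ (s i) (t i) := by
  simp [listKernel, List.zipWith_ofFn_ofFn, List.prod_ofFn]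

lemma listKernel_ofFn_right (ρ : A → B → ℝ) (y : List A) (t : Fin y.length → B) :
    listKernel ρ y (List.ofFn t) = ∏ i, ρ (y.get i) (t i) := by
  conv_lhs => arg 2; rw [← List.ofFn_get y]
  exact listKernel_ofFn ρ _ t

lemma listKernel_nonneg {ρ : A → B → ℝ} (hρ0 : ∀ a b, 0 ≤ ρ a b) (y : List A) (z : List B) :
    0 ≤ listKernel ρ y z := by
  unfold listKernel
  split_ifs
  · exact List.prod_nonneg fun r hr => by
      obtain ⟨i, hi, rfl⟩ := List.mem_iff_getElem.1 hr
      simpa using hρ0 _ _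
  · exact le_rfl

lemma sum_listKernel_le_one [Fintype A] {ρ : A → B → ℝ} (hρ0 : ∀ a b, 0 ≤ ρ a b)
    (hρ1 : ∀ b, ∑ a, ρ a b ≤ 1) (s : Finset (List A)) (z : List B) :
    ∑ y ∈ s, listKernel ρ y z ≤ 1 := by
  obtain ⟨n, t, rfl⟩ : ∃ n, ∃ t : Fin n → B, z = List.ofFn t := ⟨_, _, (List.ofFn_get z).symm⟩
  calc ∑ y ∈ s, listKernel ρ y (List.ofFn t)
      = ∑ y ∈ s with y.length = n, listKernel ρ y (List.ofFn t) :=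
        (sum_filter_of_ne fun y _ h => by
          by_contra hy
          exact h (if_neg (by simpa using hy))).symm
    _ ≤ ∑ y ∈ univ.image (List.ofFn : (Fin n → A) → List A), listKernel ρ y (List.ofFn t) := by
        refine sum_le_sum_of_subset_of_nonneg ?_ fun y _ _ => listKernel_nonneg hρ0 y _
        intro y hy
        obtain ⟨-, rfl⟩ := mem_filter.1 hy
        exact mem_image.2 ⟨y.get, mem_univ _, List.ofFn_get y⟩
    _ = ∏ i, ∑ a, ρ a (t i) := by
        rw [sum_image fun _ _ _ _ h => List.ofFn_injective h, Fintype.prod_sum]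
        simp only [listKernel_ofFn]
    _ ≤ 1 := prod_le_one (fun i _ => sum_nonneg fun a _ => hρ0 a (t i)) fun i _ => hρ1 (t i)

lemma sum_prod_mul_sum [Fintype B] {n : ℕ} (g f : Fin n → B → ℝ) (hg : ∀ i, ∑ b, g i b = 1) :
    ∑ t : Fin n → B, (∏ i, g i (t i)) * ∑ i, f i (t i) = ∑ i, ∑ b, g i b * f i b := by
  simp only [mul_sum]
  rw [sum_comm]
  refine sum_congr rfl fun i _ => ?_
  set h : Fin n → B → ℝ := fun j b => if j = i then g j b * f j b else g j b
  have hh : ∀ t : Fin n → B, (∏ j, g j (t j)) * f i (t i) = ∏ j, h j (t j) := by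
    intro t
    rw [← Fintype.prod_ite_eq' i fun j => f j (t j), ← prod_mul_distrib]
    refine prod_congr rfl fun j _ => ?_
    by_cases hj : j = i <;> simp [h, hj]
  rw [sum_congr rfl fun t _ => hh t, ← Fintype.prod_sum, Fintype.prod_eq_single i]
  · simp [h]
  · intro j hj
    simp [h, hj, hg]

lemma prod_mul_neg_logb_prod {ι : Type*} (s : Finset ι) {w r : ι → ℝ}
    (h : ∀ i ∈ s, w i ≠ 0 → r i ≠ 0) :
    (∏ i ∈ s, w i) * -logb 2 (∏ i ∈ s, r i) = (∏ i ∈ s, w i) * ∑ i ∈ s, -logb 2 (r i) := by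
  by_cases hw : ∏ i ∈ s, w i = 0
  · simp [hw]
  · rw [prod_eq_zero_iff, not_exists] at hw
    rw [logb_prod s r fun i hi => h i hi fun h0 => hw i ⟨hi, h0⟩, sum_neg_distrib]

variable (μ : FinProb Ω)

lemma sum_mul_eq_sum_sum_pr_ofFn [Fintype B] (Y : Ω → List A) (Z : Ω → List B)
    (hlen : ∀ ω, (Z ω).length = (Y ω).length) {s : Finset (List A)} (hs : ∀ ω, Y ω ∈ s)
    (g : List A → List B → ℝ) :
    ∑ ω, μ.p ω * g (Y ω) (Z ω) = ∑ y ∈ s, ∑ t : Fin y.length → B,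
      pr μ (fun ω => Z ω = List.ofFn t ∧ Y ω = y) * g y (List.ofFn t) := by
  simp only [pr, sum_mul, ite_mul, zero_mul]
  rw [sum_congr rfl fun y _ => sum_comm, sum_comm]
  refine sum_congr rfl fun ω _ => ?_
  obtain ⟨t₀, ht₀⟩ : ∃ t : Fin (Y ω).length → B, List.ofFn t = Z ω := by
    rw [← hlen ω]
    exact ⟨_, List.ofFn_get _⟩
  rw [sum_eq_single (Y ω), Fintype.sum_eq_single t₀]
  · rw [if_pos ⟨ht₀.symm, rfl⟩, ht₀]
  · exact fun t ht => if_neg fun h => ht (List.ofFn_injective (h.1.symm.trans ht₀.symm))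
  · exact fun y _ hy => sum_eq_zero fun t _ => if_neg fun h => hy h.2.symm
  · exact fun h => absurd (hs ω) h

lemma sum_pr_ofFn_mul_neg_logb_listKernel_le [Fintype B] {W ρ : A → B → ℝ} {C : ℝ}
    (hW : ∀ a, ∑ b, W a b = 1) (hWρ : ∀ a b, W a b ≠ 0 → 0 < ρ a b)
    (hC : ∀ a, ∑ b, W a b * -logb 2 (ρ a b) ≤ C) (Y : Ω → List A) (Z : Ω → List B) (y : List A)
    (hchan : ∀ t : Fin y.length → B, pr μ (fun ω => Z ω = List.ofFn t ∧ Y ω = y)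
      = pr μ (fun ω => Y ω = y) * ∏ i, W (y.get i) (t i)) :
    ∑ t : Fin y.length → B,
        pr μ (fun ω => Z ω = List.ofFn t ∧ Y ω = y) * -logb 2 (listKernel ρ y (List.ofFn t))
      ≤ pr μ (fun ω => Y ω = y) * (y.length * C) := by
  simp only [hchan, listKernel_ofFn_right, mul_assoc, ← mul_sum]
  refine mul_le_mul_of_nonneg_left ?_ (pr_nonneg μ _)
  rw [sum_congr rfl fun t _ => prod_mul_neg_logb_prod univ fun i _ hi => (hWρ _ _ hi).ne',
    sum_prod_mul_sum (fun i b => W (y.get i) b) (fun i b => -logb 2 (ρ (y.get i) b))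
      fun i => hW _]
  calc ∑ i, ∑ b, W (y.get i) b * -logb 2 (ρ (y.get i) b) ≤ ∑ _i : Fin y.length, C :=
        sum_le_sum fun i _ => hC _
    _ = y.length * C := by simp

theorem condEntropy_le_expLen_mul [Fintype A] [Fintype B] (W ρ : A → B → ℝ) (C : ℝ)
    (hW : ∀ a, ∑ b, W a b = 1) (hρ0 : ∀ a b, 0 ≤ ρ a b) (hρ1 : ∀ b, ∑ a, ρ a b ≤ 1)
    (hWρ : ∀ a b, W a b ≠ 0 → 0 < ρ a b) (hC : ∀ a, ∑ b, W a b * -logb 2 (ρ a b) ≤ C)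
    (Y : Ω → List A) (Z : Ω → List B) (hlen : ∀ ω, (Z ω).length = (Y ω).length)
    (hchan : ∀ (y : List A) (t : Fin y.length → B), pr μ (fun ω => Z ω = List.ofFn t ∧ Y ω = y)
      = pr μ (fun ω => Y ω = y) * ∏ i, W (y.get i) (t i)) :
    condEntropy μ Y Z ≤ expLen μ Y * C := by
  have hpos : ∀ ω, 0 < μ.p ω → 0 < listKernel ρ (Y ω) (Z ω) := by
    intro ω hω
    obtain ⟨t, ht⟩ : ∃ t : Fin (Y ω).length → B, List.ofFn t = Z ω := by
      rw [← hlen ω]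
      exact ⟨_, List.ofFn_get _⟩
    have hW0 : ∏ i, W ((Y ω).get i) (t i) ≠ 0 := by
      have h := hω.trans_le
        (le_pr μ (E := fun ω' => Z ω' = List.ofFn t ∧ Y ω' = Y ω) ⟨ht.symm, rfl⟩)
      rw [hchan] at h
      exact right_ne_zero_of_mul h.ne'
    rw [← ht, listKernel_ofFn_right]
    exact prod_pos fun i _ => hWρ _ _ (prod_ne_zero_iff.1 hW0 i (mem_univ i))
  have hY : ∀ ω, Y ω ∈ univ.image Y := fun ω => mem_image_of_mem Y (mem_univ ω)
  calc condEntropy μ Y Z ≤ ∑ ω, μ.p ω * -logb 2 (listKernel ρ (Y ω) (Z ω)) :=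
        condEntropy_le_sum_mul_neg_logb μ Y Z _ (listKernel_nonneg hρ0)
          (sum_listKernel_le_one hρ0 hρ1 _) hpos
    _ = ∑ y ∈ univ.image Y, ∑ t : Fin y.length → B,
          pr μ (fun ω => Z ω = List.ofFn t ∧ Y ω = y) * -logb 2 (listKernel ρ y (List.ofFn t)) :=
        sum_mul_eq_sum_sum_pr_ofFn μ Y Z hlen hY fun y z => -logb 2 (listKernel ρ y z)
    _ ≤ ∑ y ∈ univ.image Y, pr μ (fun ω => Y ω = y) * (y.length * C) :=
        sum_le_sum fun y _ =>
          sum_pr_ofFn_mul_neg_logb_listKernel_le μ hW hWρ hC Y Z y (hchan y)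
    _ = expLen μ Y * C := by
        rw [sum_pr_mul_of_mem μ Y hY fun y => (y.length : ℝ) * C, expLen, sum_mul]
        simp only [mul_assoc]

end Memoryless

section BISC

variable {q : ℕ} {p : ℤ → ℝ}

lemma mem_pmOne {b : ℤ} : b ∈ pmOne ↔ b = -1 ∨ b = 1 := by simp [pmOne]

lemma neg_mem_Kodd {k : ℤ} (hk : k ∈ Kodd q) : -k ∈ Kodd q := by
  simp only [Kodd, mem_Icc] at *
  omega

lemma mul_mem_Kodd {k b : ℤ} (hk : k ∈ Kodd q) (hb : b ∈ pmOne) : k * b ∈ Kodd q := by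
  rcases mem_pmOne.1 hb with rfl | rfl
  · simpa using neg_mem_Kodd hk
  · simpa using hk

lemma sum_Kodd_comp_mul (f : ℤ → ℝ) {b : ℤ} (hb : b ∈ pmOne) :
    ∑ k ∈ Kodd q, f (k * b) = ∑ k ∈ Kodd q, f k := by
  have hbb : b * b = 1 := by rcases mem_pmOne.1 hb with rfl | rfl <;> norm_num
  exact sum_nbij' (· * b) (· * b) (fun k hk => mul_mem_Kodd hk hb) (fun k hk => mul_mem_Kodd hk hb)
    (fun k _ => by simp [mul_assoc, hbb]) (fun k _ => by simp [mul_assoc, hbb]) fun _ _ => rfl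

lemma add_comp_neg_mul (p : ℤ → ℝ) (k : ℤ) {b : ℤ} (hb : b ∈ pmOne) :
    p (k * b) + p (-(k * b)) = p k + p (-k) := by
  rcases mem_pmOne.1 hb with rfl | rfl <;> simp [add_comm]

lemma sum_Kodd_mul_add_neg (q : ℕ) (p : ℤ → ℝ) :
    ∑ k ∈ Kodd q, p k * (p k + p (-k)) =
      2 * p 0 ^ 2 + ∑ k ∈ Icc (1 : ℤ) (((q - 1) / 2 : ℕ) : ℤ), (p k + p (-k)) ^ 2 := by
  set m : ℤ := (((q - 1) / 2 : ℕ) : ℤ)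
  have hsplit : Kodd q = Icc (-m) (-1) ∪ insert 0 (Icc 1 m) := by
    ext k
    simp only [Kodd, mem_Icc, mem_union, mem_insert]
    omega
  have hdisj : Disjoint (Icc (-m) (-1)) (insert 0 (Icc 1 m)) := by
    rw [disjoint_left]
    intro k hk hk'
    simp only [mem_Icc, mem_insert] at hk hk'
    omega
  have hneg : ∑ k ∈ Icc (-m) (-1), p k * (p k + p (-k))
      = ∑ k ∈ Icc 1 m, p (-k) * (p (-k) + p k) :=
    sum_nbij' (fun k => -k) (fun k => -k)
      (fun k hk => by simp only [mem_Icc] at *; omega)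
      (fun k hk => by simp only [mem_Icc] at *; omega)
      (fun k _ => neg_neg k) (fun k _ => neg_neg k) fun k _ => by simp
  have hsq : ∑ k ∈ Icc 1 m, p (-k) * (p (-k) + p k) + ∑ k ∈ Icc 1 m, p k * (p k + p (-k))
      = ∑ k ∈ Icc 1 m, (p k + p (-k)) ^ 2 := by
    rw [← sum_add_distrib]
    exact sum_congr rfl fun k _ => by ring
  rw [hsplit, sum_union hdisj, sum_insert (by simp), hneg, neg_zero]
  linear_combination hsq

lemma sum_mul_neg_logb_div_add_neg_le (hp0 : ∀ k ∈ Kodd q, 0 ≤ p k)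
    (hp1 : ∑ k ∈ Kodd q, p k = 1) :
    ∑ k ∈ Kodd q, p k * -logb 2 (p k / (p k + p (-k))) ≤
      (-∑ k ∈ Kodd q, p k * logb 2 (p k)) +
        logb 2 (2 * p 0 ^ 2 + ∑ k ∈ Icc (1 : ℤ) (((q - 1) / 2 : ℕ) : ℤ), (p k + p (-k)) ^ 2) := by
  have hle : ∀ k ∈ Kodd q, p k ≤ p k + p (-k) :=
    fun k hk => le_add_of_nonneg_right (hp0 _ (neg_mem_Kodd hk))
  have hterm : ∀ k ∈ Kodd q, p k * -logb 2 (p k / (p k + p (-k)))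
      = -(p k * logb 2 (p k)) + p k * logb 2 (p k + p (-k)) := by
    intro k hk
    rcases (hp0 k hk).eq_or_lt with h0 | hpos
    · simp [← h0]
    · rw [logb_div hpos.ne' (hpos.trans_le (hle k hk)).ne']
      ring
  rw [sum_congr rfl hterm, sum_add_distrib, sum_neg_distrib, ← sum_Kodd_mul_add_neg]
  exact add_le_add le_rfl (sum_mul_logb_le_logb_sum_mul _ hp0 hp1
    (fun k hk => (hp0 k hk).trans (hle k hk)) fun k hk hpos => hpos.trans_le (hle k hk))

variable (q p) in
/-- The posterior probability of the input `a` given the output `k` of the channel, for uniform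
input. -/
def biscReverse (a : pmOne) (k : Kodd q) : ℝ := p (k * a) / (p k + p (-k))

lemma sum_bisc_eq_one (hp1 : ∑ k ∈ Kodd q, p k = 1) (a : pmOne) :
    ∑ k : Kodd q, p (k * a) = 1 := by
  rw [sum_coe_sort (Kodd q) fun k => p (k * a), sum_Kodd_comp_mul p a.2, hp1]

lemma biscReverse_nonneg (hp0 : ∀ k ∈ Kodd q, 0 ≤ p k) (a : pmOne) (k : Kodd q) :
    0 ≤ biscReverse q p a k :=
  div_nonneg (hp0 _ (mul_mem_Kodd k.2 a.2)) (add_nonneg (hp0 _ k.2) (hp0 _ (neg_mem_Kodd k.2)))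

lemma sum_biscReverse_le_one (k : Kodd q) : ∑ a : pmOne, biscReverse q p a k ≤ 1 := by
  unfold biscReverse
  rw [← sum_div, sum_coe_sort pmOne fun a => p (k * a), pmOne, sum_pair (by norm_num)]
  simpa [add_comm] using div_self_le_one (p k + p (-k))

lemma biscReverse_pos (hp0 : ∀ k ∈ Kodd q, 0 ≤ p k) (a : pmOne) (k : Kodd q)
    (h : p (k * a) ≠ 0) : 0 < biscReverse q p a k := by
  have hmem := mul_mem_Kodd k.2 a.2
  have hpos := (hp0 _ hmem).lt_of_ne' h
  unfold biscReverse
  rw [← add_comp_neg_mul p k a.2]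
  exact div_pos hpos (add_pos_of_pos_of_nonneg hpos (hp0 _ (neg_mem_Kodd hmem)))

lemma sum_bisc_mul_neg_logb_biscReverse_le (hp0 : ∀ k ∈ Kodd q, 0 ≤ p k)
    (hp1 : ∑ k ∈ Kodd q, p k = 1) (a : pmOne) :
    ∑ k : Kodd q, p (k * a) * -logb 2 (biscReverse q p a k) ≤
      (-∑ k ∈ Kodd q, p k * logb 2 (p k)) +
        logb 2 (2 * p 0 ^ 2 + ∑ k ∈ Icc (1 : ℤ) (((q - 1) / 2 : ℕ) : ℤ), (p k + p (-k)) ^ 2) := by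
  let g : ℤ → ℝ := fun j => p j * -logb 2 (p j / (p j + p (-j)))
  calc ∑ k : Kodd q, p (k * a) * -logb 2 (biscReverse q p a k)
      = ∑ k ∈ Kodd q, g (k * a) := by
        rw [← sum_coe_sort (Kodd q)]
        refine sum_congr rfl fun k _ => ?_
        simp only [g, biscReverse, add_comp_neg_mul p k a.2]
    _ = ∑ k ∈ Kodd q, g k := sum_Kodd_comp_mul g a.2
    _ ≤ _ := sum_mul_neg_logb_div_add_neg_le hp0 hp1

end BISC

theorem stmt16_general {Ω S : Type*} [Fintype Ω] (μ : FinProb Ω)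
    (q : ℕ) (p : ℤ → ℝ)
    (hp0 : ∀ k ∈ Kodd q, 0 ≤ p k) (hp1 : ∑ k ∈ Kodd q, p k = 1)
    (X : Ω → S) (Y : Ω → List pmOne) (Yq : Ω → List (Kodd q))
    (hlen : ∀ ω, (Yq ω).length = (Y ω).length)
    (hcond : ∀ (x : S) (n : ℕ) (y : Fin n → pmOne) (y' : Fin n → Kodd q),
      0 < pr μ (fun ω => X ω = x ∧ Y ω = List.ofFn y) →
      pr μ (fun ω => Yq ω = List.ofFn y' ∧ X ω = x ∧ Y ω = List.ofFn y) /
        pr μ (fun ω => X ω = x ∧ Y ω = List.ofFn y) = ∏ i, p ((y' i : ℤ) * (y i : ℤ))) :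
    mutualInfo μ X Yq ≥ mutualInfo μ X Y -
      expLen μ Y * ((-∑ k ∈ Kodd q, p k * Real.logb 2 (p k)) +
        Real.logb 2 (2 * p 0 ^ 2 +
          ∑ k ∈ Finset.Icc (1 : ℤ) (((q - 1) / 2 : ℕ) : ℤ), (p k + p (-k)) ^ 2)) := by
  have hchan : ∀ (y : List pmOne) (t : Fin y.length → Kodd q),
      pr μ (fun ω => Yq ω = List.ofFn t ∧ Y ω = y)
        = pr μ (fun ω => Y ω = y) * ∏ i, p ((t i : ℤ) * (y.get i : ℤ)) := by
    intro y t
    have h := pr_and_eq_mul_of_cond μ X Y Yq (List.ofFn y.get) (List.ofFn t) _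
      fun x => hcond x _ y.get t
    rwa [List.ofFn_get] at h
  have hYq := condEntropy_le_expLen_mul μ (fun (a : pmOne) (k : Kodd q) => p (k * a))
    (biscReverse q p) _ (sum_bisc_eq_one hp1) (biscReverse_nonneg hp0) sum_biscReverse_le_one
    (biscReverse_pos hp0) (sum_bisc_mul_neg_logb_biscReverse_le hp0 hp1) Y Yq hlen hchan
  have htri := condEntropy_le_add μ X Y Yq
  unfold mutualInfo
  linarith

/-- for the binary input symmetric `q`-ary output kernel `W(b,k) = p (k·b)`
(odd `q ≥ 3`),
`I(X;Y⁽q⁾) ≥ I(X;Y) − E[|Y|]·[H(p_{−(q−1)/2},…,p_{(q−1)/2}) + log₂(2p₀² + ∑_{k=1}^{(q−1)/2}(p_k+p_{−k})²)]`. -/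
theorem stmt16 {Ω S : Type*} [Fintype Ω] (μ : FinProb Ω)
    (q : ℕ) (hq : Odd q) (hq3 : 3 ≤ q) (p : ℤ → ℝ)
    (hp0 : ∀ k ∈ Kodd q, 0 ≤ p k) (hp1 : ∑ k ∈ Kodd q, p k = 1)
    (X : Ω → S) (Y : Ω → List pmOne) (Yq : Ω → List (Kodd q))
    (hlen : ∀ ω, (Yq ω).length = (Y ω).length)
    (hcond : ∀ (x : S) (n : ℕ) (y : Fin n → pmOne) (y' : Fin n → Kodd q),
      0 < pr μ (fun ω => X ω = x ∧ Y ω = List.ofFn y) →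
      pr μ (fun ω => Yq ω = List.ofFn y' ∧ X ω = x ∧ Y ω = List.ofFn y) /
        pr μ (fun ω => X ω = x ∧ Y ω = List.ofFn y) = ∏ i, p ((y' i : ℤ) * (y i : ℤ))) :
    mutualInfo μ X Yq ≥ mutualInfo μ X Y -
      expLen μ Y * ((-∑ k ∈ Kodd q, p k * Real.logb 2 (p k)) +
        Real.logb 2 (2 * p 0 ^ 2 +
          ∑ k ∈ Finset.Icc (1 : ℤ) (((q - 1) / 2 : ℕ) : ℤ), (p k + p (-k)) ^ 2)) :=
  stmt16_general μ q p hp0 hp1 X Y Yq hlen hcond
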